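/- Let p and p̃ be probability distributions on ℝ^d with covariance matrices Σ and Σ̃, where Σ is invertible. There exists an explicit threshold f(‖Σ‖, ‖Σ^{-1}‖) > 0 such that for any 0 < η < min(√(‖Σ‖/2), f(‖Σ‖, ‖Σ^{-1}‖)): if W₂(p, p̃) ≤ η then ‖Σ̃^{-1} − Σ^{-1}‖ ≤ γ‖Σ^{-1}‖²/(1 − γ‖Σ^{-1}‖), where γ = (2√(2‖Σ‖)·η + η²(1+√2)) · ‖Σ‖/(‖Σ‖ − η√(2‖Σ‖)) satisfies γ‖Σ^{-1}‖ < 1. Concretely f(‖Σ‖,‖Σ^{-1}‖) = (−√2(2√‖Σ‖ + 1/(√‖Σ‖‖Σ^{-1}‖)) + √Δ)/(2(1+√2)) with Δ = 2(2√‖Σ‖ + 1/(√‖Σ‖‖Σ^{-1}‖))² + 4(√2+1)/‖Σ^{-1}‖. -/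

import Mathlib

open MeasureTheory
open scoped Matrix.Norms.L2Operator

/-- The mean vector of a probability measure on `ℝ^d`. -/
noncomputable def measureMean {d : ℕ} (p : Measure (EuclideanSpace ℝ (Fin d))) (i : Fin d) : ℝ :=
  ∫ x, x i ∂p

/-- The covariance matrix of a probability measure on `ℝ^d`. -/
noncomputable def covMatrix {d : ℕ} (p : Measure (EuclideanSpace ℝ (Fin d))) :
    Matrix (Fin d) (Fin d) ℝ :=
  Matrix.of fun i j => ∫ x, (x i - measureMean p i) * (x j - measureMean p j) ∂p

/-- The 2-Wasserstein distance between two measures on `ℝ^d` (Euclidean metric). -/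
noncomputable def W2 {d : ℕ} (p q : Measure (EuclideanSpace ℝ (Fin d))) : ℝ :=
  sInf { r : ℝ | 0 ≤ r ∧
    ∃ π : Measure (EuclideanSpace ℝ (Fin d) × EuclideanSpace ℝ (Fin d)),
      π.map Prod.fst = p ∧ π.map Prod.snd = q ∧
      (∫ z, ‖z.1 - z.2‖ ^ 2 ∂π) = r ^ 2 }

/-- The explicit threshold `f(‖Σ‖, ‖Σ⁻¹‖)` of Proposition 1. -/
noncomputable def etaThreshold (a b : ℝ) : ℝ :=
  (-(Real.sqrt 2 * (2 * Real.sqrt a + 1 / (Real.sqrt a * b))) +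
      Real.sqrt (2 * (2 * Real.sqrt a + 1 / (Real.sqrt a * b)) ^ 2 + 4 * (Real.sqrt 2 + 1) / b)) /
    (2 * (1 + Real.sqrt 2))

/-!
Couple `p` and `p̃` by a transport plan `π` of cost `r²`, with `X ~ p` and `Y ~ p̃` under `π`.
For unit vectors `x, y`, the entry `⟪x, (Σ̃ - Σ) y⟫` is `cov(⟪x,Y⟫, ⟪y,Y⟫) - cov(⟪x,X⟫, ⟪y,X⟫)`;
splitting `Y = X + (Y - X)` and applying Cauchy–Schwarz for covariances with `Var ⟪x,X⟫ ≤ ‖Σ‖`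
and `Var ⟪x,Y - X⟫ ≤ r²` gives `‖Σ̃ - Σ‖ ≤ 2√‖Σ‖ r + r²`, and the infimum over plans replaces `r`
by `W₂(p, p̃) ≤ η`. This is at most `γ`, and `f` is the positive root of the quadratic in `η` to
which `γ‖Σ⁻¹‖ < 1` reduces. Finally `Σ̃⁻¹ - Σ⁻¹ = Σ̃⁻¹ (Σ - Σ̃) Σ⁻¹` gives
`‖Σ̃⁻¹‖ ≤ ‖Σ⁻¹‖ + γ ‖Σ̃⁻¹‖ ‖Σ⁻¹‖`, which is solved for `‖Σ̃⁻¹‖` and fed back into the identity.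
-/

open ProbabilityTheory
open scoped RealInnerProductSpace

section Covariance

variable {Ω : Type*} {mΩ : MeasurableSpace Ω} {μ : Measure Ω} [IsFiniteMeasure μ]
  {X Y : Ω → ℝ}

theorem covariance_sq_le_variance_mul (hX : MemLp X 2 μ) (hY : MemLp Y 2 μ) :
    cov[X, Y; μ] ^ 2 ≤ Var[X; μ] * Var[Y; μ] := by
  have hquad : ∀ t : ℝ, 0 ≤ Var[Y; μ] * (t * t) + 2 * cov[X, Y; μ] * t + Var[X; μ] := by
    intro t
    have := variance_add hX (hY.const_mul t)
    rw [covariance_const_mul_right, variance_const_mul] at this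
    nlinarith [variance_nonneg (X + fun ω ↦ t * Y ω) μ]
  have := discrim_le_zero hquad
  rw [discrim] at this
  nlinarith

theorem abs_covariance_le_of_variance_le (hX : MemLp X 2 μ) (hY : MemLp Y 2 μ) {s t : ℝ}
    (hs : 0 ≤ s) (ht : 0 ≤ t) (hXs : Var[X; μ] ≤ s ^ 2) (hYt : Var[Y; μ] ≤ t ^ 2) :
    |cov[X, Y; μ]| ≤ s * t := by
  refine abs_le_of_sq_le_sq ?_ (mul_nonneg hs ht)
  calc cov[X, Y; μ] ^ 2 ≤ Var[X; μ] * Var[Y; μ] := covariance_sq_le_variance_mul hX hY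
    _ ≤ s ^ 2 * t ^ 2 := mul_le_mul hXs hYt (variance_nonneg _ _) (sq_nonneg _)
    _ = (s * t) ^ 2 := by ring

theorem abs_covariance_sub_covariance_le {X₁ X₂ Y₁ Y₂ : Ω → ℝ} (hX₁ : MemLp X₁ 2 μ)
    (hX₂ : MemLp X₂ 2 μ) (hY₁ : MemLp Y₁ 2 μ) (hY₂ : MemLp Y₂ 2 μ) {s₁ s₂ t₁ t₂ : ℝ}
    (hs₁ : 0 ≤ s₁) (hs₂ : 0 ≤ s₂) (ht₁ : 0 ≤ t₁) (ht₂ : 0 ≤ t₂)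
    (hX₁s : Var[X₁; μ] ≤ s₁ ^ 2) (hX₂s : Var[X₂; μ] ≤ s₂ ^ 2)
    (hY₁t : Var[Y₁ - X₁; μ] ≤ t₁ ^ 2) (hY₂t : Var[Y₂ - X₂; μ] ≤ t₂ ^ 2) :
    |cov[Y₁, Y₂; μ] - cov[X₁, X₂; μ]| ≤ s₁ * t₂ + t₁ * s₂ + t₁ * t₂ := by
  have hsplit : cov[Y₁, Y₂; μ] - cov[X₁, X₂; μ] =
      cov[X₁, Y₂ - X₂; μ] + cov[Y₁ - X₁, X₂; μ] + cov[Y₁ - X₁, Y₂ - X₂; μ] := by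
    rw [covariance_sub_right hX₁ hY₂ hX₂, covariance_sub_left hY₁ hX₁ hX₂,
      covariance_sub_sub hY₁ hX₁ hY₂ hX₂]
    ring
  have hD₁ := hY₁.sub hX₁
  have hD₂ := hY₂.sub hX₂
  rw [hsplit]
  refine (abs_add_three _ _ _).trans (add_le_add_three ?_ ?_ ?_)
  · exact abs_covariance_le_of_variance_le hX₁ hD₂ hs₁ ht₂ hX₁s hY₂t
  · exact abs_covariance_le_of_variance_le hD₁ hX₂ ht₁ hs₂ hY₁t hX₂s
  · exact abs_covariance_le_of_variance_le hD₁ hD₂ ht₁ ht₂ hY₁t hY₂t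

end Covariance

section Coupling

variable {E : Type*} [NormedAddCommGroup E] [InnerProductSpace ℝ E]
  [MeasurableSpace E] [BorelSpace E]

theorem covariance_inner_eq_covarianceBilin_map [CompleteSpace E] {Ω : Type*}
    {mΩ : MeasurableSpace Ω} {μ : Measure Ω} [IsFiniteMeasure μ] {Z : Ω → E} (hZ : AEMeasurable Z μ)
    (h : MemLp id 2 (μ.map Z)) (x y : E) :
    cov[fun ω ↦ ⟪x, Z ω⟫, fun ω ↦ ⟪y, Z ω⟫; μ] = covarianceBilin (μ.map Z) x y := by
  rw [covarianceBilin_apply_eq_cov h, covariance_map_fun (by fun_prop) (by fun_prop) hZ]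

variable [SecondCountableTopology E] {π : Measure (E × E)} [IsProbabilityMeasure π]

theorem variance_inner_sub_le (hfst : MemLp id 2 (π.map Prod.fst))
    (hsnd : MemLp id 2 (π.map Prod.snd)) (x : E) :
    Var[(fun z ↦ ⟪x, z.2⟫) - (fun z ↦ ⟪x, z.1⟫); π] ≤ ‖x‖ ^ 2 * ∫ z, ‖z.1 - z.2‖ ^ 2 ∂π := by
  have h₁ : MemLp Prod.fst 2 π := hfst.comp_of_map measurable_fst.aemeasurable
  have h₂ : MemLp Prod.snd 2 π := hsnd.comp_of_map measurable_snd.aemeasurable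
  have hcost : Integrable (fun z : E × E ↦ ‖z.1 - z.2‖ ^ 2) π :=
    (memLp_two_iff_integrable_sq_norm (h₁.sub h₂).1).mp (h₁.sub h₂)
  refine (variance_le_expectation_sq (by fun_prop)).trans ?_
  rw [← integral_const_mul]
  refine integral_mono_of_nonneg (.of_forall fun z ↦ sq_nonneg _) (hcost.const_mul _)
    (.of_forall fun z ↦ ?_)
  calc (((fun z : E × E ↦ ⟪x, z.2⟫) - (fun z : E × E ↦ ⟪x, z.1⟫)) ^ 2) z
        = ⟪x, z.2 - z.1⟫ ^ 2 := by simp [inner_sub_right]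
    _ ≤ (‖x‖ * ‖z.2 - z.1‖) ^ 2 := by
        rw [← sq_abs]
        exact pow_le_pow_left₀ (abs_nonneg _) (abs_real_inner_le_norm _ _) 2
    _ = ‖x‖ ^ 2 * ‖z.1 - z.2‖ ^ 2 := by rw [norm_sub_rev]; ring

theorem abs_covarianceBilin_map_snd_sub_map_fst_le [CompleteSpace E]
    (hfst : MemLp id 2 (π.map Prod.fst)) (hsnd : MemLp id 2 (π.map Prod.snd)) {a r : ℝ}
    (ha : 0 ≤ a) (hr : 0 ≤ r)
    (hvar : ∀ x, covarianceBilin (π.map Prod.fst) x x ≤ a * ‖x‖ ^ 2)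
    (hcost : ∫ z, ‖z.1 - z.2‖ ^ 2 ∂π ≤ r ^ 2) (x y : E) :
    |covarianceBilin (π.map Prod.snd) x y - covarianceBilin (π.map Prod.fst) x y| ≤
      (2 * √a * r + r ^ 2) * ‖x‖ * ‖y‖ := by
  have h₁ : MemLp Prod.fst 2 π := hfst.comp_of_map measurable_fst.aemeasurable
  have h₂ : MemLp Prod.snd 2 π := hsnd.comp_of_map measurable_snd.aemeasurable
  have hvar₁ (w : E) : Var[fun z ↦ ⟪w, z.1⟫; π] ≤ (√a * ‖w‖) ^ 2 := by
    rw [← covariance_self (by fun_prop),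
      covariance_inner_eq_covarianceBilin_map measurable_fst.aemeasurable hfst, mul_pow,
      Real.sq_sqrt ha]
    exact hvar w
  have hvar₂ (w : E) : Var[(fun z ↦ ⟪w, z.2⟫) - (fun z ↦ ⟪w, z.1⟫); π] ≤ (r * ‖w‖) ^ 2 :=
    (variance_inner_sub_le hfst hsnd w).trans (by nlinarith [sq_nonneg ‖w‖])
  rw [← covariance_inner_eq_covarianceBilin_map measurable_snd.aemeasurable hsnd,
    ← covariance_inner_eq_covarianceBilin_map measurable_fst.aemeasurable hfst]
  refine (abs_covariance_sub_covariance_le (h₁.const_inner x) (h₁.const_inner y)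
    (h₂.const_inner x) (h₂.const_inner y) (by positivity) (by positivity) (by positivity)
    (by positivity) (hvar₁ x) (hvar₁ y) (hvar₂ x) (hvar₂ y)).trans_eq ?_
  ring

end Coupling

section CovMatrix

variable {d : ℕ}

theorem inner_toEuclideanCLM_covMatrix {p : Measure (EuclideanSpace ℝ (Fin d))}
    [IsFiniteMeasure p] (hp : MemLp id 2 p) (x y : EuclideanSpace ℝ (Fin d)) :
    ⟪x, Matrix.toEuclideanCLM (𝕜 := ℝ) (covMatrix p) y⟫ = covarianceBilin p x y := by
  have hcoord (i : Fin d) : MemLp (fun x : EuclideanSpace ℝ (Fin d) ↦ x i) 2 p :=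
    (EuclideanSpace.proj (𝕜 := ℝ) i).comp_memLp' hp
  have := covarianceBilin_apply_pi hcoord x y
  rw [Measure.map_id'] at this
  rw [this, Matrix.inner_toEuclideanCLM, dotProduct]
  simp only [Matrix.mulVec, dotProduct, Finset.mul_sum]
  refine Finset.sum_congr rfl fun i _ ↦ Finset.sum_congr rfl fun j _ ↦ ?_
  simp only [covMatrix, Matrix.of_apply, covariance, measureMean]
  ring

theorem norm_covMatrix_map_snd_sub_map_fst_le
    {π : Measure (EuclideanSpace ℝ (Fin d) × EuclideanSpace ℝ (Fin d))} [IsProbabilityMeasure π]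
    (hfst : MemLp id 2 (π.map Prod.fst)) (hsnd : MemLp id 2 (π.map Prod.snd)) {r : ℝ}
    (hr : 0 ≤ r) (hcost : ∫ z, ‖z.1 - z.2‖ ^ 2 ∂π ≤ r ^ 2) :
    ‖covMatrix (π.map Prod.snd) - covMatrix (π.map Prod.fst)‖ ≤
      2 * √‖covMatrix (π.map Prod.fst)‖ * r + r ^ 2 := by
  have hvar (x : EuclideanSpace ℝ (Fin d)) :
      covarianceBilin (π.map Prod.fst) x x ≤ ‖covMatrix (π.map Prod.fst)‖ * ‖x‖ ^ 2 := by
    rw [← inner_toEuclideanCLM_covMatrix hfst]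
    refine (real_inner_le_norm _ _).trans ?_
    rw [Matrix.cstar_norm_def]
    nlinarith [(Matrix.toEuclideanCLM (𝕜 := ℝ) (covMatrix (π.map Prod.fst))).le_opNorm x,
      norm_nonneg x]
  rw [Matrix.cstar_norm_def]
  refine ContinuousLinearMap.opNorm_le_of_re_inner_le (by positivity) fun x y hx hy ↦ ?_
  have := abs_covarianceBilin_map_snd_sub_map_fst_le hfst hsnd (norm_nonneg _) hr hvar hcost y x
  rw [hx, hy, mul_one, mul_one] at this
  rw [RCLike.re_to_real, real_inner_comm, map_sub, sub_apply, inner_sub_right,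
    inner_toEuclideanCLM_covMatrix hsnd, inner_toEuclideanCLM_covMatrix hfst]
  exact (le_abs_self _).trans this

theorem le_W2 {p q : Measure (EuclideanSpace ℝ (Fin d))} [IsProbabilityMeasure p]
    [IsProbabilityMeasure q] {c : ℝ}
    (h : ∀ π : Measure (EuclideanSpace ℝ (Fin d) × EuclideanSpace ℝ (Fin d)),
      π.map Prod.fst = p → π.map Prod.snd = q → c ≤ √(∫ z, ‖z.1 - z.2‖ ^ 2 ∂π)) :
    c ≤ W2 p q := by
  refine le_csInf ⟨_, Real.sqrt_nonneg _, p.prod q, by simp, by simp,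
    (Real.sq_sqrt (integral_nonneg fun _ ↦ sq_nonneg _)).symm⟩ ?_
  rintro r ⟨hr, π, hfst, hsnd, hcost⟩
  simpa [hcost, Real.sqrt_sq hr] using h π hfst hsnd

theorem norm_covMatrix_sub_le_of_W2_le {p q : Measure (EuclideanSpace ℝ (Fin d))}
    [IsProbabilityMeasure p] [IsProbabilityMeasure q] (hp : MemLp id 2 p) (hq : MemLp id 2 q)
    {η : ℝ} (hW : W2 p q ≤ η) :
    ‖covMatrix q - covMatrix p‖ ≤ 2 * √‖covMatrix p‖ * η + η ^ 2 := by
  set a := ‖covMatrix p‖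
  set D := ‖covMatrix q - covMatrix p‖
  have ha : 0 ≤ a := norm_nonneg _
  -- `D ≤ 2 √a r + r²` rewritten as a lower bound on `r`, so that it passes to the infimum
  have hW' : √(D + a) - √a ≤ W2 p q := le_W2 fun π hfst hsnd ↦ by
    subst hfst hsnd
    have : IsProbabilityMeasure π := Measure.isProbabilityMeasure_of_map Prod.fst
    have hD := norm_covMatrix_map_snd_sub_map_fst_le hp hq (Real.sqrt_nonneg _)
      (Real.sq_sqrt (integral_nonneg fun _ ↦ sq_nonneg _)).ge
    have : √(D + a) ≤ √a + √(∫ z, ‖z.1 - z.2‖ ^ 2 ∂π) :=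
      Real.sqrt_le_iff.mpr ⟨by positivity, by nlinarith [Real.sq_sqrt ha]⟩
    linarith
  have := (Real.sqrt_le_iff.mp (show √(D + a) ≤ √a + η by linarith)).2
  nlinarith [Real.sq_sqrt ha]

end CovMatrix

section InversePerturbation

variable {R : Type*} [NormedRing R] [HasSummableGeomSeries R]

theorem Units.isUnit_of_norm_sub_mul_lt_one (u : Rˣ) {b : R} (h : ‖b - u‖ * ‖(↑u⁻¹ : R)‖ < 1) :
    IsUnit b := by
  have ht : ‖(↑u⁻¹ : R) * (u - b)‖ < 1 :=
    (norm_mul_le _ _).trans_lt (by rwa [mul_comm, norm_sub_rev])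
  have hb : b = u * (1 - (↑u⁻¹ : R) * (u - b)) := by
    rw [mul_sub, mul_one, ← mul_assoc, Units.mul_inv, one_mul, sub_sub_cancel]
  rw [hb]
  exact u.isUnit.mul (Units.oneSub _ ht).isUnit

theorem norm_ringInverse_sub_ringInverse_le {a b : R} (ha : IsUnit a) {γ : ℝ} (hab : ‖b - a‖ ≤ γ)
    (hγ : γ * ‖Ring.inverse a‖ < 1) :
    ‖Ring.inverse b - Ring.inverse a‖ ≤
      γ * ‖Ring.inverse a‖ ^ 2 / (1 - γ * ‖Ring.inverse a‖) := by
  obtain ⟨u, rfl⟩ := ha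
  rw [Ring.inverse_unit] at hγ ⊢
  obtain ⟨v, rfl⟩ := u.isUnit_of_norm_sub_mul_lt_one
    ((mul_le_mul_of_nonneg_right hab (norm_nonneg _)).trans_lt hγ)
  rw [Ring.inverse_unit]
  set β := ‖(↑u⁻¹ : R)‖
  have hdiff : (↑v⁻¹ : R) - ↑u⁻¹ = ↑v⁻¹ * (u - v) * ↑u⁻¹ := by
    rw [mul_sub, sub_mul, Units.inv_mul, one_mul, mul_assoc, Units.mul_inv, mul_one]
  have hdiff_le : ‖(↑v⁻¹ : R) - ↑u⁻¹‖ ≤ ‖(↑v⁻¹ : R)‖ * γ * β := by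
    rw [hdiff]
    refine (norm_mul₃_le ..).trans ?_
    gcongr
    rwa [norm_sub_rev]
  have hv : ‖(↑v⁻¹ : R)‖ * (1 - γ * β) ≤ β := by
    have := (norm_sub_norm_le (↑v⁻¹ : R) ↑u⁻¹).trans hdiff_le
    linarith
  have hγ0 : 0 ≤ γ := (norm_nonneg _).trans hab
  have hpos : 0 < 1 - γ * β := by linarith
  rw [le_div_iff₀ hpos]
  calc ‖(↑v⁻¹ : R) - ↑u⁻¹‖ * (1 - γ * β) ≤ ‖(↑v⁻¹ : R)‖ * γ * β * (1 - γ * β) := by gcongr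
    _ = ‖(↑v⁻¹ : R)‖ * (1 - γ * β) * (γ * β) := by ring
    _ ≤ β * (γ * β) := by gcongr
    _ = γ * β ^ 2 := by ring

end InversePerturbation

theorem quadratic_neg_of_lt_root {α β κ x : ℝ} (hα : 0 < α) (hβ : 0 ≤ β) (hκ : 0 ≤ κ)
    (hx : 0 ≤ x) (hxr : x < (-β + √(β ^ 2 + 4 * α * κ)) / (2 * α)) :
    α * x ^ 2 + β * x - κ < 0 := by
  set r := (-β + √(β ^ 2 + 4 * α * κ)) / (2 * α)
  have hroot : 2 * α * r + β = √(β ^ 2 + 4 * α * κ) := by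
    simp only [r]; field_simp; ring
  have hr : α * r ^ 2 + β * r - κ = 0 := by
    have := Real.sq_sqrt (show 0 ≤ β ^ 2 + 4 * α * κ by positivity)
    rw [← hroot] at this
    have : 4 * α * (α * r ^ 2 + β * r - κ) = 0 := by linear_combination this
    simpa [hα.ne'] using this
  nlinarith [mul_pos hα (sub_pos.2 hxr)]

/-- The paper's `γ`, with `a = ‖Σ‖`. -/
noncomputable def covErrorBound (a η : ℝ) : ℝ :=
  (2 * √(2 * a) * η + η ^ 2 * (1 + √2)) * (a / (a - η * √(2 * a)))

section CovErrorBound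

variable {a η : ℝ}

theorem mul_sqrt_two_mul_lt (ha : 0 < a) (hηa : η < √(a / 2)) : η * √(2 * a) < a := by
  calc η * √(2 * a) < √(a / 2) * √(2 * a) := by gcongr
    _ = a := by
      rw [← Real.sqrt_mul (by positivity), show a / 2 * (2 * a) = a ^ 2 by ring,
        Real.sqrt_sq ha.le]

theorem two_mul_sqrt_mul_add_sq_le_covErrorBound (ha : 0 < a) (hη : 0 ≤ η)
    (hηa : η < √(a / 2)) : 2 * √a * η + η ^ 2 ≤ covErrorBound a η := by
  have hden := mul_sqrt_two_mul_lt ha hηa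
  have hsqrt : √a ≤ √(2 * a) := Real.sqrt_le_sqrt (by linarith)
  have hnum : 2 * √a * η + η ^ 2 ≤ 2 * √(2 * a) * η + η ^ 2 * (1 + √2) := by
    have : 0 ≤ η ^ 2 * √2 := by positivity
    nlinarith
  have hratio : 1 ≤ a / (a - η * √(2 * a)) := by
    rw [le_div_iff₀ (by linarith)]
    nlinarith [Real.sqrt_nonneg (2 * a)]
  calc 2 * √a * η + η ^ 2 = (2 * √a * η + η ^ 2) * 1 := by ring
    _ ≤ covErrorBound a η := by unfold covErrorBound; gcongr

theorem covErrorBound_mul_lt_one {b : ℝ} (ha : 0 < a) (hb : 0 < b) (hη : 0 ≤ η)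
    (hηa : η < √(a / 2)) (hηf : η < etaThreshold a b) : covErrorBound a η * b < 1 := by
  have hden := mul_sqrt_two_mul_lt ha hηa
  set s := √a
  set c := 2 * s + 1 / (s * b)
  have hs : 0 < s := Real.sqrt_pos.2 ha
  have hs2 : s ^ 2 = a := Real.sq_sqrt ha.le
  have h2 : √2 ^ 2 = 2 := Real.sq_sqrt (by norm_num)
  have ht : √(2 * a) = √2 * s := Real.sqrt_mul (by norm_num) a
  have hquad : (1 + √2) * η ^ 2 + √2 * c * η - 1 / b < 0 := by
    refine quadratic_neg_of_lt_root (by positivity) (by positivity) (by positivity) hη ?_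
    convert hηf using 1
    rw [mul_pow, h2, etaThreshold]
    congr 4
    ring
  -- multiplying the quadratic by `a * b` gives exactly `γ * b < 1` with the denominator cleared
  have hexpand : a * b * ((1 + √2) * η ^ 2 + √2 * c * η - 1 / b) =
      (2 * √(2 * a) * η + η ^ 2 * (1 + √2)) * a * b - (a - η * √(2 * a)) := by
    rw [ht, ← hs2]
    simp only [c]
    field_simp
    ring
  have : (2 * √(2 * a) * η + η ^ 2 * (1 + √2)) * a * b < a - η * √(2 * a) := by
    nlinarith [mul_neg_of_pos_of_neg (mul_pos ha hb) hquad]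
  rw [covErrorBound, mul_div_assoc', div_mul_eq_mul_div, div_lt_one (by linarith)]
  linarith

end CovErrorBound

/-- Precision matrix error: if `W₂(p, p̃) ≤ η` with
`0 < η < min(√(‖Σ‖/2), f(‖Σ‖, ‖Σ⁻¹‖))`, then with
`γ = (2√(2‖Σ‖) η + η²(1+√2)) · ‖Σ‖/(‖Σ‖ − η√(2‖Σ‖))` one has `γ‖Σ⁻¹‖ < 1` and
`‖Σ̃⁻¹ − Σ⁻¹‖ ≤ γ‖Σ⁻¹‖²/(1 − γ‖Σ⁻¹‖)`. -/
theorem precision_matrix_error {d : ℕ}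
    (p q : Measure (EuclideanSpace ℝ (Fin d)))
    [IsProbabilityMeasure p] [IsProbabilityMeasure q]
    (hp : MemLp id 2 p) (hq : MemLp id 2 q)
    (hSig : IsUnit (covMatrix p))
    (η : ℝ) (hη0 : 0 < η)
    (hη : η < min (Real.sqrt (‖covMatrix p‖ / 2))
      (etaThreshold ‖covMatrix p‖ ‖(covMatrix p)⁻¹‖))
    (hW : W2 p q ≤ η) :
    let γ : ℝ := (2 * Real.sqrt (2 * ‖covMatrix p‖) * η + η ^ 2 * (1 + Real.sqrt 2)) *
      (‖covMatrix p‖ / (‖covMatrix p‖ - η * Real.sqrt (2 * ‖covMatrix p‖)))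
    γ * ‖(covMatrix p)⁻¹‖ < 1 ∧
      ‖(covMatrix q)⁻¹ - (covMatrix p)⁻¹‖ ≤
        γ * ‖(covMatrix p)⁻¹‖ ^ 2 / (1 - γ * ‖(covMatrix p)⁻¹‖) := by
  intro γ
  have hηa : η < √(‖covMatrix p‖ / 2) := hη.trans_le (min_le_left _ _)
  have hηf := hη.trans_le (min_le_right _ _)
  have ha : 0 < ‖covMatrix p‖ := by linarith [Real.sqrt_pos.mp (hη0.trans hηa)]
  have hb : 0 < ‖(covMatrix p)⁻¹‖ := norm_pos_iff.2 fun h ↦ ha.ne' <| by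
    rw [← Matrix.nonsing_inv_nonsing_inv _ ((Matrix.isUnit_iff_isUnit_det _).mp hSig), h,
      Matrix.inv_zero, norm_zero]
  have hγ : γ * ‖(covMatrix p)⁻¹‖ < 1 := covErrorBound_mul_lt_one ha hb hη0.le hηa hηf
  have hE : ‖covMatrix q - covMatrix p‖ ≤ γ := (norm_covMatrix_sub_le_of_W2_le hp hq hW).trans
    (two_mul_sqrt_mul_add_sq_le_covErrorBound ha hη0.le hηa)
  refine ⟨hγ, ?_⟩
  simp only [Matrix.nonsing_inv_eq_ringInverse] at hγ ⊢
  exact norm_ringInverse_sub_ringInverse_le hSig hE hγ
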